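/- Suppose W satisfies (W₁) and (W₃). Then W(t,u) = o(|u|²) as u → 0 uniformly in t ∈ ℝ; that is, for every ε > 0 there exists δ > 0 such that |W(t,u)| ≤ ε|u|² for all t ∈ ℝ and all u ∈ ℝⁿ with 0 < |u| ≤ δ. -/

import Mathlib

open MeasureTheory Filter Topology
open scoped ENNReal
open scoped RealInnerProductSpace

noncomputable section

/-- `ℝⁿ` with its Euclidean structure. -/
abbrev Rn (n : ℕ) := EuclideanSpace ℝ (Fin n)

/-- Fourier transform with the convention `û(w) = ∫ e^{-i x w} u(x) dx`, componentwise. -/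
def FT {n : ℕ} (u : ℝ → Rn n) (w : ℝ) (j : Fin n) : ℂ :=
  ∫ x : ℝ, Complex.exp (-(Complex.I * x * w)) * (u x j)

/-- Left Liouville–Weyl fractional derivative
`_{-∞}D_t^α u(t) = (α/Γ(1-α)) ∫₀^∞ (u(t) - u(t-ξ))/ξ^{α+1} dξ`. -/
def leftD {n : ℕ} (α : ℝ) (u : ℝ → Rn n) (t : ℝ) : Rn n :=
  (α / Real.Gamma (1 - α)) • ∫ ξ in Set.Ioi (0 : ℝ), (ξ ^ (α + 1))⁻¹ • (u t - u (t - ξ))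

/-- Right Liouville–Weyl fractional derivative. -/
def rightD {n : ℕ} (α : ℝ) (u : ℝ → Rn n) (t : ℝ) : Rn n :=
  (α / Real.Gamma (1 - α)) • ∫ ξ in Set.Ioi (0 : ℝ), (ξ ^ (α + 1))⁻¹ • (u t - u (t + ξ))

/-- Left Liouville–Weyl fractional integral. -/
def leftI {n : ℕ} (α : ℝ) (u : ℝ → Rn n) (x : ℝ) : Rn n :=
  (Real.Gamma α)⁻¹ • ∫ ξ in Set.Iio x, ((x - ξ) ^ (α - 1)) • u ξ

/-- Right Liouville–Weyl fractional integral. -/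
def rightI {n : ℕ} (α : ℝ) (u : ℝ → Rn n) (x : ℝ) : Rn n :=
  (Real.Gamma α)⁻¹ • ∫ ξ in Set.Ioi x, ((ξ - x) ^ (α - 1)) • u ξ

/-- Membership in `H^α(ℝ,ℝⁿ)`: `u ∈ L²` and `|w|^α û ∈ L²`. -/
def MemH {n : ℕ} (α : ℝ) (u : ℝ → Rn n) : Prop :=
  MemLp u 2 volume ∧ Integrable (fun w : ℝ => |w| ^ (2 * α) * ∑ j, ‖FT u w j‖ ^ 2)

/-- The squared `H^α` norm `‖u‖_α² = ‖u‖_{L²}² + ‖|w|^α û‖_{L²}²`. -/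
def HnormSq {n : ℕ} (α : ℝ) (u : ℝ → Rn n) : ℝ :=
  (∫ x : ℝ, ‖u x‖ ^ 2) + ∫ w : ℝ, |w| ^ (2 * α) * ∑ j, ‖FT u w j‖ ^ 2

def Hnorm {n : ℕ} (α : ℝ) (u : ℝ → Rn n) : ℝ := Real.sqrt (HnormSq α u)

/-- The `L²` norm. -/
def L2norm {n : ℕ} (u : ℝ → Rn n) : ℝ := Real.sqrt (∫ t : ℝ, ‖u t‖ ^ 2)

/-- `(A x, y)` for a matrix `A`: the bilinear pairing `∑ i ∑ j A i j • x j • y i`. -/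
def QL {n : ℕ} (A : Matrix (Fin n) (Fin n) ℝ) (x y : Rn n) : ℝ :=
  ∑ i, ∑ j, A i j * x j * y i

/-- Hypothesis (L): `L` is continuous, symmetric positive definite, and coercive:
`(L(t)x,x) ≥ l(t)|x|²` with `l` continuous, positive, `l(t) → ∞` as `|t| → ∞`. -/
def CondL {n : ℕ} (L : ℝ → Matrix (Fin n) (Fin n) ℝ) : Prop :=
  Continuous L ∧ (∀ t, (L t).IsSymm) ∧ (∀ t, (L t).PosDef) ∧
    ∃ l : ℝ → ℝ, Continuous l ∧ (∀ t, 0 < l t) ∧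
      Tendsto l (cocompact ℝ) atTop ∧
      ∀ (t : ℝ) (x : Rn n), l t * ‖x‖ ^ 2 ≤ QL (L t) x x

/-- `W ∈ C¹(ℝ×ℝⁿ, ℝ)` with gradient (in the second variable) `gW`. -/
def CondW0 {n : ℕ} (W : ℝ → Rn n → ℝ) (gW : ℝ → Rn n → Rn n) : Prop :=
  Continuous (fun p : ℝ × Rn n => W p.1 p.2) ∧
  Continuous (fun p : ℝ × Rn n => gW p.1 p.2) ∧
  ∀ t x, HasGradientAt (W t) (gW t x) x

/-- Hypothesis (W₁): Ambrosetti–Rabinowitz with exponent `μ > 2`. -/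
def CondW1 {n : ℕ} (μ : ℝ) (W : ℝ → Rn n → ℝ) (gW : ℝ → Rn n → Rn n) : Prop :=
  CondW0 W gW ∧ 2 < μ ∧
    ∀ (t : ℝ) (x : Rn n), x ≠ 0 → 0 < μ * W t x ∧ μ * W t x ≤ ⟪x, gW t x⟫

/-- Hypothesis (W₂): `|∇W(t,x)| = o(|x|)` as `x → 0`, uniformly in `t`. -/
def CondW2 {n : ℕ} (gW : ℝ → Rn n → Rn n) : Prop :=
  ∀ ε > (0 : ℝ), ∃ δ > (0 : ℝ), ∀ (t : ℝ) (x : Rn n), ‖x‖ ≤ δ → ‖gW t x‖ ≤ ε * ‖x‖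

/-- Hypothesis (W₃): domination `|W(t,x)| + |∇W(t,x)| ≤ |W̄(x)|` by a continuous `W̄`. -/
def CondW3 {n : ℕ} (W : ℝ → Rn n → ℝ) (gW : ℝ → Rn n → Rn n) (Wb : Rn n → ℝ) : Prop :=
  Continuous Wb ∧ ∀ (t : ℝ) (x : Rn n), |W t x| + ‖gW t x‖ ≤ |Wb x|

/-- `M = max_{|u|=1} W̄(u)`. -/
def Mmax {n : ℕ} (Wb : Rn n → ℝ) : ℝ := sSup (Wb '' Metric.sphere (0 : Rn n) 1)

/-- Membership in `X^α`. -/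
def MemX {n : ℕ} (α : ℝ) (L : ℝ → Matrix (Fin n) (Fin n) ℝ) (u : ℝ → Rn n) : Prop :=
  MemH α u ∧ Integrable (fun t : ℝ => ‖leftD α u t‖ ^ 2 + QL (L t) (u t) (u t))

/-- The squared `X^α` norm. -/
def XnormSq {n : ℕ} (α : ℝ) (L : ℝ → Matrix (Fin n) (Fin n) ℝ) (u : ℝ → Rn n) : ℝ :=
  ∫ t : ℝ, (‖leftD α u t‖ ^ 2 + QL (L t) (u t) (u t))

def Xnorm {n : ℕ} (α : ℝ) (L : ℝ → Matrix (Fin n) (Fin n) ℝ) (u : ℝ → Rn n) : ℝ :=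
  Real.sqrt (XnormSq α L u)

/-- The `X^α` inner product. -/
def Xinner {n : ℕ} (α : ℝ) (L : ℝ → Matrix (Fin n) (Fin n) ℝ) (u v : ℝ → Rn n) : ℝ :=
  ∫ t : ℝ, (⟪leftD α u t, leftD α v t⟫ + QL (L t) (u t) (v t))

/-- The action functional `I(u) = ½‖u‖_{X^α}² − ∫ W(t,u) + ∫ (f,u)`. -/
def If {n : ℕ} (α : ℝ) (L : ℝ → Matrix (Fin n) (Fin n) ℝ) (W : ℝ → Rn n → ℝ)
    (f : ℝ → Rn n) (u : ℝ → Rn n) : ℝ :=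
  (1 / 2) * XnormSq α L u - (∫ t : ℝ, W t (u t)) + ∫ t : ℝ, ⟪f t, u t⟫

/-- The derivative pairing `I'(u)v`. -/
def If' {n : ℕ} (α : ℝ) (L : ℝ → Matrix (Fin n) (Fin n) ℝ) (gW : ℝ → Rn n → Rn n)
    (f : ℝ → Rn n) (u v : ℝ → Rn n) : ℝ :=
  ∫ t : ℝ, (⟪leftD α u t, leftD α v t⟫ + QL (L t) (u t) (v t)
    - ⟪gW t (u t), v t⟫ + ⟪f t, v t⟫)

/-- `I'(u_k) → 0` in the dual norm. -/
def DerivTendstoZero {n : ℕ} (α : ℝ) (L : ℝ → Matrix (Fin n) (Fin n) ℝ)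
    (gW : ℝ → Rn n → Rn n) (f : ℝ → Rn n) (u : ℕ → ℝ → Rn n) : Prop :=
  ∀ ε > (0 : ℝ), ∃ N : ℕ, ∀ k ≥ N, ∀ v : ℝ → Rn n, MemX α L v →
    |If' α L gW f (u k) v| ≤ ε * Xnorm α L v

/-! Along each ray, (W₁) makes `s ↦ s ^ (-μ) W(t, s y)` nondecreasing, so
`W(t, x) ≤ |x| ^ μ W(t, x / |x|)` for `|x| ≤ 1`. By (W₃) and compactness of the unit sphere the
last factor is bounded, and `μ > 2` turns `W(t, x) = O(|x| ^ μ)` into `o(|x| ^ 2)`. -/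

theorem monotoneOn_mul_rpow_neg_of_mul_le_mul_deriv {g g' : ℝ → ℝ} {μ : ℝ}
    (hg : ∀ s > 0, HasDerivAt g (g' s) s) (hgg' : ∀ s > 0, μ * g s ≤ s * g' s) :
    MonotoneOn (fun s => g s * s ^ (-μ)) (Set.Ioi 0) := by
  have hderiv : ∀ s > (0 : ℝ), HasDerivAt (fun s => g s * s ^ (-μ))
      (g' s * s ^ (-μ) + g s * (-μ * s ^ (-μ - 1))) s := fun s hs =>
    (hg s hs).mul (Real.hasDerivAt_rpow_const (Or.inl hs.ne'))
  refine monotoneOn_of_hasDerivWithinAt_nonneg (convex_Ioi 0)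
    (fun s hs => (hderiv s hs).continuousAt.continuousWithinAt)
    (fun s hs => (hderiv s (interior_subset hs)).hasDerivWithinAt) fun s hs => ?_
  rw [interior_Ioi] at hs
  have hs : 0 < s := hs
  have hsplit : s ^ (-μ) = s ^ (-μ - 1) * s := by
    rw [← Real.rpow_add_one hs.ne', sub_add_cancel]
  have hfactor : g' s * s ^ (-μ) + g s * (-μ * s ^ (-μ - 1))
      = s ^ (-μ - 1) * (s * g' s - μ * g s) := by
    rw [hsplit]; ring
  rw [hfactor]
  exact mul_nonneg (Real.rpow_nonneg hs.le _) (sub_nonneg.2 (hgg' s hs))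

section Superhomogeneous

variable {E : Type*} [NormedAddCommGroup E] [InnerProductSpace ℝ E] [CompleteSpace E]

theorem apply_smul_le_rpow_mul_of_mul_le_inner_gradient {f : E → ℝ} {f' : E → E} {μ r : ℝ}
    {y : E} (hf : ∀ x, HasGradientAt f (f' x) x) (hff' : ∀ x ≠ 0, μ * f x ≤ ⟪x, f' x⟫)
    (hy : y ≠ 0) (hr0 : 0 < r) (hr1 : r ≤ 1) : f (r • y) ≤ r ^ μ * f y := by
  have hray : ∀ s : ℝ, HasDerivAt (fun s : ℝ => f (s • y)) ⟪f' (s • y), y⟫ s := fun s => by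
    have := (hf (s • y)).hasFDerivAt.comp_hasDerivAt s ((hasDerivAt_id s).smul_const y)
    exact (by simpa using this : HasDerivAt (f ∘ fun s : ℝ => s • y) ⟪f' (s • y), y⟫ s)
  have hmono := monotoneOn_mul_rpow_neg_of_mul_le_mul_deriv (fun s _ => hray s) fun s hs => by
    simpa [real_inner_smul_left, real_inner_comm] using hff' (s • y) (smul_ne_zero hs.ne' hy)
  have hr : f (r • y) * r ^ (-μ) ≤ f y := by
    simpa using hmono (Set.mem_Ioi.2 hr0) (Set.mem_Ioi.2 one_pos) hr1
  calc f (r • y) = f (r • y) * r ^ (-μ) * r ^ μ := by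
        rw [mul_assoc, ← Real.rpow_add hr0, neg_add_cancel, Real.rpow_zero, mul_one]
    _ ≤ f y * r ^ μ := by gcongr
    _ = r ^ μ * f y := mul_comm _ _

theorem apply_le_norm_rpow_mul_of_mul_le_inner_gradient {f : E → ℝ} {f' : E → E} {μ : ℝ}
    {x : E} (hf : ∀ x, HasGradientAt f (f' x) x) (hff' : ∀ x ≠ 0, μ * f x ≤ ⟪x, f' x⟫)
    (hx : x ≠ 0) (hx1 : ‖x‖ ≤ 1) : f x ≤ ‖x‖ ^ μ * f (‖x‖⁻¹ • x) := by
  have hx0 : 0 < ‖x‖ := norm_pos_iff.2 hx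
  have := apply_smul_le_rpow_mul_of_mul_le_inner_gradient hf hff'
    (smul_ne_zero (inv_ne_zero hx0.ne') hx) hx0 hx1
  rwa [smul_smul, mul_inv_cancel₀ hx0.ne', one_smul] at this

end Superhomogeneous

theorem exists_pos_forall_mul_rpow_le_mul_sq {μ : ℝ} (hμ : 2 < μ) (C : ℝ) {ε : ℝ}
    (hε : 0 < ε) : ∃ δ > 0, ∀ r : ℝ, 0 ≤ r → r ≤ δ → C * r ^ μ ≤ ε * r ^ 2 := by
  have hlim : ContinuousAt (fun r : ℝ => C * r ^ (μ - 2)) 0 :=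
    (Real.continuousAt_rpow_const 0 _ (Or.inr (by linarith))).const_mul C
  have hsmall : ∀ᶠ r in 𝓝 (0 : ℝ), C * r ^ (μ - 2) < ε := by
    apply hlim.eventually (gt_mem_nhds _)
    simpa [Real.zero_rpow (by linarith : μ - 2 ≠ 0)] using hε
  obtain ⟨δ, hδ, hδε⟩ := Metric.nhds_basis_closedBall.eventually_iff.1 hsmall
  refine ⟨δ, hδ, fun r hr hrδ => ?_⟩
  have hrε : C * r ^ (μ - 2) < ε := hδε (by simpa [abs_of_nonneg hr] using hrδ)
  calc C * r ^ μ = C * r ^ (μ - 2) * r ^ 2 := by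
        rw [mul_assoc, ← Real.rpow_natCast, ← Real.rpow_add' hr (by linarith)]; norm_num
    _ ≤ ε * r ^ 2 := by gcongr

theorem CondW3.exists_forall_sphere_le {n : ℕ} {W : ℝ → Rn n → ℝ} {gW : ℝ → Rn n → Rn n}
    {Wb : Rn n → ℝ} (hW3 : CondW3 W gW Wb) :
    ∃ C, ∀ (t : ℝ) (y : Rn n), ‖y‖ = 1 → W t y ≤ C := by
  obtain ⟨C, hC⟩ := (isCompact_sphere (0 : Rn n) 1).exists_bound_of_continuousOn
    hW3.1.continuousOn
  refine ⟨C, fun t y hy => ?_⟩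
  calc W t y ≤ |W t y| + ‖gW t y‖ := by linarith [le_abs_self (W t y), norm_nonneg (gW t y)]
    _ ≤ ‖Wb y‖ := hW3.2 t y
    _ ≤ C := hC y (by simpa using hy)

theorem CondW1.exists_le_mul_norm_rpow {n : ℕ} {μ : ℝ} {W : ℝ → Rn n → ℝ}
    {gW : ℝ → Rn n → Rn n} {Wb : Rn n → ℝ} (hW1 : CondW1 μ W gW) (hW3 : CondW3 W gW Wb) :
    ∃ C, ∀ (t : ℝ) (x : Rn n), x ≠ 0 → ‖x‖ ≤ 1 → W t x ≤ C * ‖x‖ ^ μ := by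
  obtain ⟨C, hC⟩ := hW3.exists_forall_sphere_le
  refine ⟨C, fun t x hx hx1 => ?_⟩
  have hy : ‖‖x‖⁻¹ • x‖ = 1 := by
    rw [norm_smul, norm_inv, norm_norm, inv_mul_cancel₀ (norm_ne_zero_iff.2 hx)]
  calc W t x ≤ ‖x‖ ^ μ * W t (‖x‖⁻¹ • x) :=
        apply_le_norm_rpow_mul_of_mul_le_inner_gradient (hW1.1.2.2 t)
          (fun x hx => (hW1.2.2 t x hx).2) hx hx1
    _ ≤ ‖x‖ ^ μ * C := by gcongr; exact hC t _ hy
    _ = C * ‖x‖ ^ μ := mul_comm _ _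

theorem CondW1.pos {n : ℕ} {μ : ℝ} {W : ℝ → Rn n → ℝ} {gW : ℝ → Rn n → Rn n}
    (hW1 : CondW1 μ W gW) (t : ℝ) {x : Rn n} (hx : x ≠ 0) : 0 < W t x :=
  pos_of_mul_pos_right (hW1.2.2 t x hx).1 (by linarith [hW1.2.1])

/-- under (W₁) and (W₃), `W(t,u) = o(|u|²)` as `u → 0` uniformly in `t`. -/
theorem stmt9_W_little_o (n : ℕ) (μ : ℝ) (W : ℝ → Rn n → ℝ) (gW : ℝ → Rn n → Rn n)
    (hW1 : CondW1 μ W gW) (hW3 : ∃ Wb : Rn n → ℝ, CondW3 W gW Wb) :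
    ∀ ε > (0 : ℝ), ∃ δ > (0 : ℝ), ∀ (t : ℝ) (x : Rn n),
      0 < ‖x‖ → ‖x‖ ≤ δ → |W t x| ≤ ε * ‖x‖ ^ 2 := by
  obtain ⟨Wb, hWb⟩ := hW3
  obtain ⟨C, hC⟩ := hW1.exists_le_mul_norm_rpow hWb
  intro ε hε
  obtain ⟨δ, hδ, hδε⟩ := exists_pos_forall_mul_rpow_le_mul_sq hW1.2.1 C hε
  refine ⟨min δ 1, lt_min hδ one_pos, fun t x hx hxδ => ?_⟩
  have hx0 : x ≠ 0 := norm_pos_iff.1 hx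
  rw [abs_of_pos (hW1.pos t hx0)]
  exact (hC t x hx0 (hxδ.trans (min_le_right _ _))).trans
    (hδε _ hx.le (hxδ.trans (min_le_left _ _)))

end
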